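/- arXiv:1608.01507 — 14 statements merged into one kernel-verified Lean document; each statement's English description precedes it below -/
import Mathlib

section
/- Consider the reduced three-wave interaction system ẋ = −2y² + γx + z + δy, ẏ = 2xy + γy − δx, ż = −2xz − 2z with γ = 0 and δ an arbitrary real parameter. Then for every differentiable solution (x(t), y(t), z(t)), the function t ↦ e^{2t} z(t) (y(t) − δ/2) is constant; that is, I = e^{2t} z (y − δ/2) is a first integral. -/
/-!
Along a solution, `d/dt [e^{2t} z (y - δ/2)] = γ e^{2t} z y`: the factor `e^{2t}` cancels the
`-2z` in `ż`, and the `x`-terms of `ż (y - δ/2)` and `z ẏ` cancel each other. For `γ = 0` the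
derivative vanishes identically.
-/

noncomputable def threeWaveIntegral (δ : ℝ) (y z : ℝ → ℝ) (t : ℝ) : ℝ :=
  Real.exp (2 * t) * z t * (y t - δ / 2)

theorem hasDerivAt_threeWaveIntegral (γ δ : ℝ) {x y z : ℝ → ℝ} {t : ℝ}
    (hy : HasDerivAt y (2 * x t * y t + γ * y t - δ * x t) t)
    (hz : HasDerivAt z (-2 * x t * z t - 2 * z t) t) :
    HasDerivAt (threeWaveIntegral δ y z) (γ * (Real.exp (2 * t) * z t * y t)) t := by
  have he : HasDerivAt (fun t : ℝ => Real.exp (2 * t)) (Real.exp (2 * t) * 2) t :=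
    ((hasDerivAt_id t).const_mul 2).exp.congr_deriv (by simp)
  exact ((he.mul hz).mul (hy.sub_const (δ / 2))).congr_deriv (by simp only [Pi.mul_apply]; ring)

theorem three_wave_case1_general (γ δ : ℝ) (hγ : γ = 0) (x y z : ℝ → ℝ)
    (hy : ∀ t, HasDerivAt y (2 * x t * y t + γ * y t - δ * x t) t)
    (hz : ∀ t, HasDerivAt z (-2 * x t * z t - 2 * z t) t) :
    ∀ s t : ℝ,
      Real.exp (2 * s) * z s * (y s - δ / 2) =
        Real.exp (2 * t) * z t * (y t - δ / 2) := by
  have hI : ∀ t, HasDerivAt (threeWaveIntegral δ y z) 0 t := fun t => by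
    simpa [hγ] using hasDerivAt_threeWaveIntegral γ δ (hy t) (hz t)
  exact is_const_of_deriv_eq_zero (fun t => (hI t).differentiableAt) (fun t => (hI t).deriv)

/-- Reduced three-wave interaction system with γ = 0:
`I = e^{2t} z (y - δ/2)` is a first integral. -/
theorem three_wave_case1 (γ δ : ℝ) (hγ : γ = 0) (x y z : ℝ → ℝ)
    (hx : ∀ t, HasDerivAt x (-2 * (y t) ^ 2 + γ * x t + z t + δ * y t) t)
    (hy : ∀ t, HasDerivAt y (2 * x t * y t + γ * y t - δ * x t) t)
    (hz : ∀ t, HasDerivAt z (-2 * x t * z t - 2 * z t) t) :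
    ∀ s t : ℝ,
      Real.exp (2 * s) * z s * (y s - δ / 2) =
        Real.exp (2 * t) * z t * (y t - δ / 2) :=
  three_wave_case1_general γ δ hγ x y z hy hz
end

section
/- Consider the reduced three-wave interaction system ẋ = −2y² + γx + z + δy, ẏ = 2xy + γy − δx, ż = −2xz − 2z with γ = −1 and δ an arbitrary real parameter. Then for every differentiable solution (x(t), y(t), z(t)), the function t ↦ e^{2t} (x(t)² + y(t)² + z(t)) is constant; that is, I = e^{2t}(x² + y² + z) is a first integral. -/
/-!
Along any solution, `W = x² + y² + z` satisfies `W' = 2γ (x² + y²) - 2z`: the cubic terms cancel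
between the three equations. Hence `(e^{2t} W)' = 2 (γ + 1) e^{2t} (x² + y²)`, which vanishes
exactly when `γ = -1`.
-/

section ThreeWave

variable {γ δ t : ℝ} {x y z : ℝ → ℝ}

theorem hasDerivAt_sq_add_sq_add
    (hx : HasDerivAt x (-2 * (y t) ^ 2 + γ * x t + z t + δ * y t) t)
    (hy : HasDerivAt y (2 * x t * y t + γ * y t - δ * x t) t)
    (hz : HasDerivAt z (-2 * x t * z t - 2 * z t) t) :
    HasDerivAt (fun t => (x t) ^ 2 + (y t) ^ 2 + z t)
      (2 * γ * ((x t) ^ 2 + (y t) ^ 2) - 2 * z t) t :=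
  (((hx.pow 2).add (hy.pow 2)).add hz).congr_deriv (by ring)

theorem hasDerivAt_exp_two_mul_sq_add_sq_add
    (hx : HasDerivAt x (-2 * (y t) ^ 2 + γ * x t + z t + δ * y t) t)
    (hy : HasDerivAt y (2 * x t * y t + γ * y t - δ * x t) t)
    (hz : HasDerivAt z (-2 * x t * z t - 2 * z t) t) :
    HasDerivAt (fun t => Real.exp (2 * t) * ((x t) ^ 2 + (y t) ^ 2 + z t))
      (2 * (γ + 1) * Real.exp (2 * t) * ((x t) ^ 2 + (y t) ^ 2)) t := by
  have hexp : HasDerivAt (fun t => Real.exp (2 * t)) (Real.exp (2 * t) * 2) t := by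
    simpa using ((hasDerivAt_id t).const_mul 2).exp
  exact (hexp.mul (hasDerivAt_sq_add_sq_add hx hy hz)).congr_deriv (by ring)

end ThreeWave

/-- Reduced three-wave interaction system with γ = -1:
`I = e^{2t} (x² + y² + z)` is a first integral. -/
theorem three_wave_case2 (γ δ : ℝ) (hγ : γ = -1) (x y z : ℝ → ℝ)
    (hx : ∀ t, HasDerivAt x (-2 * (y t) ^ 2 + γ * x t + z t + δ * y t) t)
    (hy : ∀ t, HasDerivAt y (2 * x t * y t + γ * y t - δ * x t) t)
    (hz : ∀ t, HasDerivAt z (-2 * x t * z t - 2 * z t) t) :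
    ∀ s t : ℝ,
      Real.exp (2 * s) * ((x s) ^ 2 + (y s) ^ 2 + z s) =
        Real.exp (2 * t) * ((x t) ^ 2 + (y t) ^ 2 + z t) := by
  have hI := fun t => hasDerivAt_exp_two_mul_sq_add_sq_add (hx t) (hy t) (hz t)
  simp only [hγ, neg_add_cancel, mul_zero, zero_mul] at hI
  exact is_const_of_deriv_eq_zero (fun t => (hI t).differentiableAt) (fun t => (hI t).deriv)
end

section
/- Consider the reduced three-wave interaction system ẋ = −2y² + γx + z + δy, ẏ = 2xy + γy − δx, ż = −2xz − 2z with γ = −2 and δ a nonzero real parameter. Then for every differentiable solution (x(t), y(t), z(t)), the function t ↦ e^{4t} (x(t)² + y(t)² + (2/δ) y(t) z(t)) is constant; that is, I = e^{4t}(x² + y² + (2/δ) y z) is a first integral. -/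
/-!
With `γ = -2` the quadratic `Q = x² + y² + (2/δ) y z` satisfies `Q' = -4 Q` along every solution:
the cubic terms cancel, and the factor `2/δ` is exactly what makes the `x z` terms coming from
`ż` and from `ẏ z` cancel. Hence `e^{4t} Q` has zero derivative and is constant.
-/

open Real

theorem exp_mul_eq_of_hasDerivAt_neg_mul {f : ℝ → ℝ} {c : ℝ}
    (hf : ∀ t, HasDerivAt f (-c * f t) t) (s t : ℝ) :
    exp (c * s) * f s = exp (c * t) * f t := by
  have hderiv : ∀ u, HasDerivAt (fun u => exp (c * u) * f u) 0 u := by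
    intro u
    refine ((((hasDerivAt_id u).const_mul c).exp).mul (hf u)).congr_deriv ?_
    simp only [id, mul_one]
    ring
  exact is_const_of_deriv_eq_zero (fun u => (hderiv u).differentiableAt)
    (fun u => (hderiv u).deriv) s t

theorem hasDerivAt_threeWave_quadratic {δ : ℝ} (hδ : δ ≠ 0) {x y z : ℝ → ℝ} {t : ℝ}
    (hx : HasDerivAt x (-2 * y t ^ 2 + -2 * x t + z t + δ * y t) t)
    (hy : HasDerivAt y (2 * x t * y t + -2 * y t - δ * x t) t)
    (hz : HasDerivAt z (-2 * x t * z t - 2 * z t) t) :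
    HasDerivAt (fun t => x t ^ 2 + y t ^ 2 + 2 / δ * y t * z t)
      (-4 * (x t ^ 2 + y t ^ 2 + 2 / δ * y t * z t)) t := by
  refine (((hx.pow 2).add (hy.pow 2)).add ((hy.const_mul (2 / δ)).mul hz)).congr_deriv ?_
  field_simp
  ring

/-- Reduced three-wave interaction system with γ = -2, δ ≠ 0:
`I = e^{4t} (x² + y² + (2/δ) y z)` is a first integral. -/
theorem three_wave_case3 (γ δ : ℝ) (hγ : γ = -2) (hδ : δ ≠ 0) (x y z : ℝ → ℝ)
    (hx : ∀ t, HasDerivAt x (-2 * (y t) ^ 2 + γ * x t + z t + δ * y t) t)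
    (hy : ∀ t, HasDerivAt y (2 * x t * y t + γ * y t - δ * x t) t)
    (hz : ∀ t, HasDerivAt z (-2 * x t * z t - 2 * z t) t) :
    ∀ s t : ℝ,
      Real.exp (4 * s) * ((x s) ^ 2 + (y s) ^ 2 + (2 / δ) * y s * z s) =
        Real.exp (4 * t) * ((x t) ^ 2 + (y t) ^ 2 + (2 / δ) * y t * z t) := by
  subst hγ
  exact exp_mul_eq_of_hasDerivAt_neg_mul fun t =>
    hasDerivAt_threeWave_quadratic hδ (hx t) (hy t) (hz t)
end

section
/- Consider the reduced three-wave interaction system ẋ = −2y² + γx + z + δy, ẏ = 2xy + γy − δx, ż = −2xz − 2z with δ = 0 and γ an arbitrary real parameter. Then for every differentiable solution (x(t), y(t), z(t)), the function t ↦ e^{(2−γ)t} y(t) z(t) is constant; that is, I = e^{(2−γ)t} y z is a first integral. -/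
/-! With `δ = 0` the last two equations are linear in `y` and `z` respectively:
`ẏ = (2x + γ) y` and `ż = (-2x - 2) z`. The coefficients sum to the constant `γ - 2`,
so the `x`-dependence cancels in `(y z)˙ = (γ - 2) y z`, and `e^{(2-γ)t} y z` has zero derivative. -/

open Real

theorem hasDerivAt_exp_mul_mul_mul_eq_zero {c : ℝ} {a b y z : ℝ → ℝ}
    (hy : ∀ t, HasDerivAt y (a t * y t) t) (hz : ∀ t, HasDerivAt z (b t * z t) t)
    (hab : ∀ t, a t + b t = -c) (t : ℝ) :
    HasDerivAt (fun t => exp (c * t) * y t * z t) 0 t := by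
  have hexp : HasDerivAt (fun t => exp (c * t)) (exp (c * t) * c) t :=
    ((hasDerivAt_id t).const_mul c).exp.congr_deriv (by simp)
  have hI : HasDerivAt (fun t => exp (c * t) * y t * z t)
      ((exp (c * t) * c * y t + exp (c * t) * (a t * y t)) * z t
        + exp (c * t) * y t * (b t * z t)) t :=
    (hexp.mul (hy t)).mul (hz t)
  refine hI.congr_deriv ?_
  linear_combination (exp (c * t) * y t * z t) * hab t

theorem exp_mul_mul_mul_eq_of_hasDerivAt {c : ℝ} {a b y z : ℝ → ℝ}
    (hy : ∀ t, HasDerivAt y (a t * y t) t) (hz : ∀ t, HasDerivAt z (b t * z t) t)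
    (hab : ∀ t, a t + b t = -c) (s t : ℝ) :
    exp (c * s) * y s * z s = exp (c * t) * y t * z t :=
  have hI := hasDerivAt_exp_mul_mul_mul_eq_zero hy hz hab
  is_const_of_deriv_eq_zero (fun u => (hI u).differentiableAt) (fun u => (hI u).deriv) s t

theorem three_wave_case4_general (γ δ : ℝ) (hδ : δ = 0) (x y z : ℝ → ℝ)
    (hy : ∀ t, HasDerivAt y (2 * x t * y t + γ * y t - δ * x t) t)
    (hz : ∀ t, HasDerivAt z (-2 * x t * z t - 2 * z t) t) :
    ∀ s t : ℝ,
      Real.exp ((2 - γ) * s) * y s * z s =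
        Real.exp ((2 - γ) * t) * y t * z t := by
  subst hδ
  refine exp_mul_mul_mul_eq_of_hasDerivAt (a := fun t => 2 * x t + γ) (b := fun t => -2 * x t - 2)
    (fun t => (hy t).congr_deriv (by ring)) (fun t => (hz t).congr_deriv (by ring)) (fun t => ?_)
  ring

/-- Reduced three-wave interaction system with δ = 0:
`I = e^{(2-γ)t} y z` is a first integral. -/
theorem three_wave_case4 (γ δ : ℝ) (hδ : δ = 0) (x y z : ℝ → ℝ)
    (hx : ∀ t, HasDerivAt x (-2 * (y t) ^ 2 + γ * x t + z t + δ * y t) t)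
    (hy : ∀ t, HasDerivAt y (2 * x t * y t + γ * y t - δ * x t) t)
    (hz : ∀ t, HasDerivAt z (-2 * x t * z t - 2 * z t) t) :
    ∀ s t : ℝ,
      Real.exp ((2 - γ) * s) * y s * z s =
        Real.exp ((2 - γ) * t) * y t * z t :=
  three_wave_case4_general γ δ hδ x y z hy hz
end

section
/- Consider the reduced three-wave interaction system ẋ = −2y² + γx + z + δy, ẏ = 2xy + γy − δx, ż = −2xz − 2z with δ = 0 and γ = −1, i.e. ẋ = −2y² − x + z, ẏ = 2xy − y, ż = −2xz − 2z. Then for every differentiable solution (x(t), y(t), z(t)), both functions t ↦ e^{2t} (x(t)² + y(t)² + z(t)) and t ↦ e^{3t} y(t) z(t) are constant; that is, I₁ = e^{2t}(x² + y² + z) and I₂ = e^{3t} y z are two first integrals. -/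
/-!
Along a solution, `u = x² + y² + z` and `v = y z` satisfy the scalar linear equations
`u' = -2u` and `v' = -3v` (the cubic terms `±4xy²` and `±2xyz` cancel), so `e^{2t} u` and
`e^{3t} v` have zero derivative.
-/

open Real

theorem exp_mul_eq_exp_mul_of_hasDerivAt_neg_mul {g : ℝ → ℝ} {c : ℝ}
    (hg : ∀ t, HasDerivAt g (-c * g t) t) (s t : ℝ) :
    exp (c * s) * g s = exp (c * t) * g t := by
  have hderiv : ∀ t, HasDerivAt (fun t => exp (c * t) * g t) 0 t := fun t =>
    ((((hasDerivAt_id t).const_mul c).exp).fun_mul (hg t)).congr_deriv (by ring)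
  exact is_const_of_deriv_eq_zero (fun t => (hderiv t).differentiableAt)
    (fun t => (hderiv t).deriv) s t

section ReducedThreeWave

variable {x y z : ℝ → ℝ}

theorem hasDerivAt_sq_add_sq_add_of_threeWave
    (hx : ∀ t, HasDerivAt x (-2 * y t ^ 2 - x t + z t) t)
    (hy : ∀ t, HasDerivAt y (2 * x t * y t - y t) t)
    (hz : ∀ t, HasDerivAt z (-2 * x t * z t - 2 * z t) t) (t : ℝ) :
    HasDerivAt (fun t => x t ^ 2 + y t ^ 2 + z t) (-2 * (x t ^ 2 + y t ^ 2 + z t)) t :=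
  ((((hx t).fun_pow 2).fun_add ((hy t).fun_pow 2)).fun_add (hz t)).congr_deriv (by
    simp only [Nat.cast_ofNat]
    ring)

theorem hasDerivAt_mul_of_threeWave
    (hy : ∀ t, HasDerivAt y (2 * x t * y t - y t) t)
    (hz : ∀ t, HasDerivAt z (-2 * x t * z t - 2 * z t) t) (t : ℝ) :
    HasDerivAt (fun t => y t * z t) (-3 * (y t * z t)) t :=
  ((hy t).fun_mul (hz t)).congr_deriv (by ring)

end ReducedThreeWave

/-- Reduced three-wave interaction system with δ = 0, γ = -1:
both `I₁ = e^{2t}(x² + y² + z)` and `I₂ = e^{3t} y z` are first integrals. -/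
theorem three_wave_case5 (γ δ : ℝ) (hδ : δ = 0) (hγ : γ = -1) (x y z : ℝ → ℝ)
    (hx : ∀ t, HasDerivAt x (-2 * (y t) ^ 2 + γ * x t + z t + δ * y t) t)
    (hy : ∀ t, HasDerivAt y (2 * x t * y t + γ * y t - δ * x t) t)
    (hz : ∀ t, HasDerivAt z (-2 * x t * z t - 2 * z t) t) :
    (∀ s t : ℝ,
      Real.exp (2 * s) * ((x s) ^ 2 + (y s) ^ 2 + z s) =
        Real.exp (2 * t) * ((x t) ^ 2 + (y t) ^ 2 + z t)) ∧
    (∀ s t : ℝ,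
      Real.exp (3 * s) * y s * z s = Real.exp (3 * t) * y t * z t) := by
  subst hδ hγ
  have hx' : ∀ t, HasDerivAt x (-2 * y t ^ 2 - x t + z t) t := fun t =>
    (hx t).congr_deriv (by ring)
  have hy' : ∀ t, HasDerivAt y (2 * x t * y t - y t) t := fun t =>
    (hy t).congr_deriv (by ring)
  refine ⟨exp_mul_eq_exp_mul_of_hasDerivAt_neg_mul
    (hasDerivAt_sq_add_sq_add_of_threeWave hx' hy' hz), fun s t => ?_⟩
  simpa only [mul_assoc] using
    exp_mul_eq_exp_mul_of_hasDerivAt_neg_mul (hasDerivAt_mul_of_threeWave hy' hz) s t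
end

section
/- Let γ, δ ∈ ℝ. Define H₁(x,y,z) = z y − (δ/2) z and H₂(x,y,z) = x² + y² + z on ℝ³, and let G(x,y,z) be the symmetric 3×3 matrix diag(−γ/2, −γ/2, 2z). Then for every (x,y,z) ∈ ℝ³ the vector field of the reduced three-wave interaction system satisfies the metriplectic identity (−2y² + γx + z + δy, 2xy + γy − δx, −2xz − 2z) = ∇H₁(x,y,z) × ∇H₂(x,y,z) − G(x,y,z) ∇H₂(x,y,z), where × is the cross product in ℝ³ and ∇ the gradient in the variables (x,y,z). -/
open Matrix

noncomputable def grad (H : ℝ → ℝ → ℝ → ℝ) (x y z : ℝ) : Fin 3 → ℝ :=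
  ![deriv (fun s => H s y z) x, deriv (fun s => H x s z) y, deriv (fun s => H x y s) z]

theorem grad_eq_of_hasDerivAt {H : ℝ → ℝ → ℝ → ℝ} {x y z a b c : ℝ}
    (ha : HasDerivAt (fun s => H s y z) a x) (hb : HasDerivAt (fun s => H x s z) b y)
    (hc : HasDerivAt (fun s => H x y s) c z) :
    grad H x y z = ![a, b, c] := by
  rw [grad, ha.deriv, hb.deriv, hc.deriv]

theorem grad_three_wave_H₁ (δ x y z : ℝ) :
    grad (fun x y z => z * y - δ / 2 * z) x y z = ![0, z, y - δ / 2] := by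
  apply grad_eq_of_hasDerivAt
  · exact hasDerivAt_const x _
  · simpa using ((hasDerivAt_id y).const_mul z).sub_const (δ / 2 * z)
  · simpa using ((hasDerivAt_id z).mul_const y).fun_sub ((hasDerivAt_id z).const_mul (δ / 2))

theorem grad_three_wave_H₂ (x y z : ℝ) :
    grad (fun x y z => x ^ 2 + y ^ 2 + z) x y z = ![2 * x, 2 * y, 1] := by
  apply grad_eq_of_hasDerivAt
  · simpa using ((hasDerivAt_pow 2 x).add_const (y ^ 2)).add_const z
  · simpa using ((hasDerivAt_pow 2 y).const_add (x ^ 2)).add_const z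
  · simpa using (hasDerivAt_id z).const_add (x ^ 2 + y ^ 2)

/-- Metriplectic formulation of the reduced three-wave interaction system:
`X = ∇H₁ × ∇H₂ - G ∇H₂` with `H₁ = zy - (δ/2)z`, `H₂ = x² + y² + z`,
`G = diag(-γ/2, -γ/2, 2z)`. -/
theorem three_wave_metriplectic (γ δ : ℝ) :
    ∀ x y z : ℝ,
      ![-2 * y ^ 2 + γ * x + z + δ * y, 2 * x * y + γ * y - δ * x,
          -2 * x * z - 2 * z] =
        (grad (fun x y z => z * y - δ / 2 * z) x y z) ⨯₃
            (grad (fun x y z => x ^ 2 + y ^ 2 + z) x y z) -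
          (!![-γ / 2, 0, 0; 0, -γ / 2, 0; 0, 0, 2 * z] : Matrix (Fin 3) (Fin 3) ℝ).mulVec
            (grad (fun x y z => x ^ 2 + y ^ 2 + z) x y z) := by
  intro x y z
  rw [grad_three_wave_H₁, grad_three_wave_H₂, cross_apply]
  ext i
  fin_cases i <;> simp <;> ring
end

section
/- Define H₁(u,v,w) = v w and H₂(u,v,w) = u² + v² + w on ℝ³. Then for every (u,v,w) ∈ ℝ³ the identity (−2v² + w, 2uv, −2uw) = ∇H₁(u,v,w) × ∇H₂(u,v,w) holds; that is, the transformed reduced three-wave interaction system u′ = −2v² + w, v′ = 2uv, w′ = −2uw is a Nambu–Poisson (bi-Hamiltonian) system with Hamiltonians H₁ and H₂ and Jacobi's last multiplier equal to one. -/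
open Matrix

theorem grad_snd_mul_thd (u v w : ℝ) :
    grad (fun _ v w => v * w) u v w = ![0, w, v] :=
  grad_eq_of_hasDerivAt (hasDerivAt_const u (v * w))
    (by simpa using (hasDerivAt_id v).mul_const w) (by simpa using (hasDerivAt_id w).const_mul v)

theorem grad_sq_add_sq_add (u v w : ℝ) :
    grad (fun u v w => u ^ 2 + v ^ 2 + w) u v w = ![2 * u, 2 * v, 1] :=
  grad_eq_of_hasDerivAt
    (by simpa using ((hasDerivAt_pow 2 u).add_const (v ^ 2)).add_const w)
    (by simpa using ((hasDerivAt_pow 2 v).const_add (u ^ 2)).add_const w)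
    (by simpa using (hasDerivAt_id w).const_add (u ^ 2 + v ^ 2))

/-- The transformed reduced three-wave interaction system
`u' = -2v² + w, v' = 2uv, w' = -2uw` is Nambu-Poisson:
its vector field equals `∇H₁ × ∇H₂` with `H₁ = vw`, `H₂ = u² + v² + w`. -/
theorem three_wave_nambu :
    ∀ u v w : ℝ,
      ![-2 * v ^ 2 + w, 2 * u * v, -2 * u * w] =
        (grad (fun u v w => v * w) u v w) ⨯₃
          (grad (fun u v w => u ^ 2 + v ^ 2 + w) u v w) := by
  intro u v w
  rw [grad_snd_mul_thd, grad_sq_add_sq_add, cross_apply]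
  simp only [vecCons_inj, and_true, cons_val_zero, cons_val_one, cons_val]
  exact ⟨by ring, by ring, by ring⟩
end

section
/- Consider the Rabinovich system ẋ = hy − ν₁x + yz, ẏ = hx − ν₂y − xz, ż = −ν₃z + xy with h = 0 and ν₂ = ν₃ (ν₁, ν₃ arbitrary real parameters). Then for every differentiable solution (x(t), y(t), z(t)), the function t ↦ e^{2ν₃ t}(y(t)² + z(t)²) is constant; that is, I₁ = e^{2ν₃ t}(y² + z²) is a first integral. -/
/-! With `h = 0` and `ν₂ = ν₃` the cross terms `∓xyz` cancel in `d/dt (y² + z²)`, leaving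
`d/dt (y² + z²) = -2ν₃ (y² + z²)`; an integrating factor `e^{2ν₃ t}` turns this into a
vanishing derivative. -/

theorem exp_mul_eq_of_hasDerivAt_neg_mul_s8 {g : ℝ → ℝ} {k : ℝ}
    (hg : ∀ t, HasDerivAt g (-k * g t) t) (s t : ℝ) :
    Real.exp (k * s) * g s = Real.exp (k * t) * g t := by
  have hderiv : ∀ t, HasDerivAt (fun t => Real.exp (k * t) * g t) 0 t := by
    intro t
    have hexp : HasDerivAt (fun t => Real.exp (k * t)) (Real.exp (k * t) * k) t := by
      simpa using ((hasDerivAt_id t).const_mul k).exp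
    exact (hexp.fun_mul (hg t)).congr_deriv (by ring)
  exact is_const_of_deriv_eq_zero (fun t => (hderiv t).differentiableAt)
    (fun t => (hderiv t).deriv) s t

theorem rabinovich_case1_general (h ν₂ ν₃ : ℝ) (hh : h = 0) (hν : ν₂ = ν₃)
    (x y z : ℝ → ℝ)
    (hy : ∀ t, HasDerivAt y (h * x t - ν₂ * y t - x t * z t) t)
    (hz : ∀ t, HasDerivAt z (-ν₃ * z t + x t * y t) t) :
    ∀ s t : ℝ,
      Real.exp (2 * ν₃ * s) * ((y s) ^ 2 + (z s) ^ 2) =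
        Real.exp (2 * ν₃ * t) * ((y t) ^ 2 + (z t) ^ 2) := by
  subst hh hν
  have hsq : ∀ t, HasDerivAt (fun t => y t ^ 2 + z t ^ 2)
      (-(2 * ν₂) * (y t ^ 2 + z t ^ 2)) t := by
    intro t
    refine (((hy t).fun_pow 2).fun_add ((hz t).fun_pow 2)).congr_deriv ?_
    push_cast
    ring
  exact exp_mul_eq_of_hasDerivAt_neg_mul_s8 hsq

/-- Rabinovich system with h = 0, ν₂ = ν₃:
`I₁ = e^{2ν₃ t}(y² + z²)` is a first integral. -/
theorem rabinovich_case1 (h ν₁ ν₂ ν₃ : ℝ) (hh : h = 0) (hν : ν₂ = ν₃)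
    (x y z : ℝ → ℝ)
    (hx : ∀ t, HasDerivAt x (h * y t - ν₁ * x t + y t * z t) t)
    (hy : ∀ t, HasDerivAt y (h * x t - ν₂ * y t - x t * z t) t)
    (hz : ∀ t, HasDerivAt z (-ν₃ * z t + x t * y t) t) :
    ∀ s t : ℝ,
      Real.exp (2 * ν₃ * s) * ((y s) ^ 2 + (z s) ^ 2) =
        Real.exp (2 * ν₃ * t) * ((y t) ^ 2 + (z t) ^ 2) :=
  rabinovich_case1_general h ν₂ ν₃ hh hν x y z hy hz
end

section
/- Consider the Rabinovich system ẋ = hy − ν₁x + yz, ẏ = hx − ν₂y − xz, ż = −ν₃z + xy with h = 0 and ν₁ = ν₂ (ν₁, ν₃ arbitrary real parameters). Then for every differentiable solution (x(t), y(t), z(t)), the function t ↦ e^{2ν₁ t}(x(t)² + y(t)²) is constant; that is, I₂ = e^{2ν₁ t}(x² + y²) is a first integral. -/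
/-! With `h = 0` and `ν₁ = ν₂` the coupling terms `± x y z` cancel in the derivative of
`x² + y²`, which therefore satisfies the linear equation `r' = -2ν₁ r`; multiplying by the
integrating factor `e^{2ν₁ t}` gives a function with zero derivative. -/

open Real

theorem exp_mul_mul_eq_of_hasDerivAt {c : ℝ} {r : ℝ → ℝ}
    (hr : ∀ t, HasDerivAt r (-(c * r t)) t) (s t : ℝ) :
    exp (c * s) * r s = exp (c * t) * r t := by
  have hderiv : ∀ t, HasDerivAt (fun t => exp (c * t) * r t) 0 t := fun t =>
    (((hasDerivAt_id t).const_mul c).exp.mul (hr t)).congr_deriv (by ring)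
  exact is_const_of_deriv_eq_zero (fun u => (hderiv u).differentiableAt)
    (fun u => (hderiv u).deriv) s t

theorem rabinovich_case2_general (h ν₁ ν₂ : ℝ) (hh : h = 0) (hν : ν₁ = ν₂)
    (x y z : ℝ → ℝ)
    (hx : ∀ t, HasDerivAt x (h * y t - ν₁ * x t + y t * z t) t)
    (hy : ∀ t, HasDerivAt y (h * x t - ν₂ * y t - x t * z t) t) :
    ∀ s t : ℝ,
      Real.exp (2 * ν₁ * s) * ((x s) ^ 2 + (y s) ^ 2) =
        Real.exp (2 * ν₁ * t) * ((x t) ^ 2 + (y t) ^ 2) := by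
  subst hh hν
  have hdissipation : ∀ t, HasDerivAt (fun t => x t ^ 2 + y t ^ 2)
      (-(2 * ν₁ * (x t ^ 2 + y t ^ 2))) t := fun t =>
    (((hx t).fun_pow 2).fun_add ((hy t).fun_pow 2)).congr_deriv (by norm_num; ring)
  exact exp_mul_mul_eq_of_hasDerivAt hdissipation

/-- Rabinovich system with h = 0, ν₁ = ν₂:
`I₂ = e^{2ν₁ t}(x² + y²)` is a first integral. -/
theorem rabinovich_case2 (h ν₁ ν₂ ν₃ : ℝ) (hh : h = 0) (hν : ν₁ = ν₂)
    (x y z : ℝ → ℝ)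
    (hx : ∀ t, HasDerivAt x (h * y t - ν₁ * x t + y t * z t) t)
    (hy : ∀ t, HasDerivAt y (h * x t - ν₂ * y t - x t * z t) t)
    (hz : ∀ t, HasDerivAt z (-ν₃ * z t + x t * y t) t) :
    ∀ s t : ℝ,
      Real.exp (2 * ν₁ * s) * ((x s) ^ 2 + (y s) ^ 2) =
        Real.exp (2 * ν₁ * t) * ((x t) ^ 2 + (y t) ^ 2) :=
  rabinovich_case2_general h ν₁ ν₂ hh hν x y z hx hy
end

section
/- Define H₁(u,v,w) = (v² + w²)/2 and H₂(u,v,w) = (u² + v²)/2 on ℝ³. Then for every (u,v,w) ∈ ℝ³ the identity (vw, −uw, uv) = ∇H₂(u,v,w) × ∇H₁(u,v,w) holds; that is, the transformed Rabinovich system u′ = vw, v′ = −uw, w′ = uv is a bi-Hamiltonian/Nambu–Poisson system, given by the cross product of the gradients of its two first integrals, with Jacobi's last multiplier equal to one. -/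
open Matrix

lemma deriv_sq_add_const_div_two (c a : ℝ) : deriv (fun s : ℝ => (s ^ 2 + c) / 2) a = a := by
  simp [(((hasDerivAt_pow 2 a).add_const c).div_const 2).deriv]

lemma deriv_const_add_sq_div_two (c a : ℝ) : deriv (fun s : ℝ => (c + s ^ 2) / 2) a = a := by
  simp_rw [add_comm c]
  exact deriv_sq_add_const_div_two c a

lemma grad_sq_add_sq_div_two_left (x y z : ℝ) :
    grad (fun x y _ => (x ^ 2 + y ^ 2) / 2) x y z = ![x, y, 0] := by
  simp only [grad, deriv_sq_add_const_div_two, deriv_const_add_sq_div_two, deriv_const]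

lemma grad_sq_add_sq_div_two_right (x y z : ℝ) :
    grad (fun _ y z => (y ^ 2 + z ^ 2) / 2) x y z = ![0, y, z] := by
  simp only [grad, deriv_sq_add_const_div_two, deriv_const_add_sq_div_two, deriv_const]

/-- The transformed Rabinovich system `u' = vw, v' = -uw, w' = uv` is
bi-Hamiltonian/Nambu-Poisson: its vector field equals `∇H₂ × ∇H₁` with
`H₁ = (v² + w²)/2`, `H₂ = (u² + v²)/2`. -/
theorem rabinovich_nambu :
    ∀ u v w : ℝ,
      ![v * w, -(u * w), u * v] =
        (grad (fun u v w => (u ^ 2 + v ^ 2) / 2) u v w) ⨯₃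
          (grad (fun u v w => (v ^ 2 + w ^ 2) / 2) u v w) := by
  intro u v w
  rw [grad_sq_add_sq_div_two_left, grad_sq_add_sq_div_two_right, cross_apply]
  simp
end

section
/- Consider the reduced Hindmarsh–Rose system ẋ = y − z + bx² + α, ẏ = β − dx² − y, ż = px − rz − γ with parameters satisfying b = −d, p = −2, α = β + γ, r = 1 (d, β, γ arbitrary). Then for every differentiable solution (x(t), y(t), z(t)), the function t ↦ e^{2t}(x(t) − y(t) + z(t)) is constant; that is, I = e^{2t}(x − y + z) is a first integral. -/
/-! Along the reduced system with these parameters, `w = x - y + z` satisfies `ẇ = -2w`,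
since the quadratic terms and the constants `α - β - γ` cancel; hence `e^{2t} w` has zero
derivative. -/

open Real

theorem exp_mul_eq_of_hasDerivAt_eq_neg_mul {w : ℝ → ℝ} (k : ℝ)
    (hw : ∀ t, HasDerivAt w (-k * w t) t) (s t : ℝ) :
    exp (k * s) * w s = exp (k * t) * w t := by
  have hderiv : ∀ u, HasDerivAt (fun u => exp (k * u) * w u) 0 u := fun u => by
    have hexp : HasDerivAt (fun u => exp (k * u)) (exp (k * u) * k) u :=
      ((hasDerivAt_id u).const_mul k).exp.congr_deriv (by simp)
    exact (hexp.mul (hw u)).congr_deriv (by ring)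
  exact is_const_of_deriv_eq_zero (fun u => (hderiv u).differentiableAt)
    (fun u => (hderiv u).deriv) s t

theorem hasDerivAt_sub_add_of_hindmarshRose {β γ d : ℝ} {x y z : ℝ → ℝ}
    (hx : ∀ t, HasDerivAt x (y t - z t + -d * (x t) ^ 2 + (β + γ)) t)
    (hy : ∀ t, HasDerivAt y (β - d * (x t) ^ 2 - y t) t)
    (hz : ∀ t, HasDerivAt z (-2 * x t - 1 * z t - γ) t) (t : ℝ) :
    HasDerivAt (fun u => x u - y u + z u) (-2 * (x t - y t + z t)) t :=
  (((hx t).sub (hy t)).add (hz t)).congr_deriv (by ring)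

/-- Reduced Hindmarsh-Rose system with b = -d, p = -2, α = β + γ, r = 1:
`I = e^{2t}(x - y + z)` is a first integral. -/
theorem hindmarsh_rose_case3 (α β γ b d p r : ℝ)
    (hb : b = -d) (hp : p = -2) (hα : α = β + γ) (hr : r = 1) (x y z : ℝ → ℝ)
    (hx : ∀ t, HasDerivAt x (y t - z t + b * (x t) ^ 2 + α) t)
    (hy : ∀ t, HasDerivAt y (β - d * (x t) ^ 2 - y t) t)
    (hz : ∀ t, HasDerivAt z (p * x t - r * z t - γ) t) :
    ∀ s t : ℝ,
      Real.exp (2 * s) * (x s - y s + z s) =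
        Real.exp (2 * t) * (x t - y t + z t) := by
  subst hb hp hα hr
  exact exp_mul_eq_of_hasDerivAt_eq_neg_mul 2 (hasDerivAt_sub_add_of_hindmarshRose hx hy hz)
end

section
/- Consider the reduced Hindmarsh–Rose system ẋ = y − z + bx² + α, ẏ = β − dx² − y, ż = px − rz − γ with p ≠ 0 and parameters satisfying d = 2b, r = −(p+1), β = 2(γ/p − α) (α, γ, p, b otherwise arbitrary). Then for every differentiable solution (x(t), y(t), z(t)), the function t ↦ e^{−t}(2x(t) + y(t) + 2z(t)/p) is constant; that is, I = e^{−t}(2x + y + 2z/p) is a first integral. -/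
theorem exp_neg_mul_mul_eq_of_hasDerivAt_const_mul {f : ℝ → ℝ} {c : ℝ}
    (hf : ∀ t, HasDerivAt f (c * f t) t) (s t : ℝ) :
    Real.exp (-(c * s)) * f s = Real.exp (-(c * t)) * f t := by
  have hderiv : ∀ u, HasDerivAt (fun u => Real.exp (-(c * u)) * f u) 0 u := fun u => by
    have hexp : HasDerivAt (fun u => Real.exp (-(c * u))) (Real.exp (-(c * u)) * -c) u := by
      simpa using ((hasDerivAt_id u).const_mul c).neg.exp
    refine (hexp.mul (hf u)).congr_deriv ?_
    ring
  exact is_const_of_deriv_eq_zero (fun u => (hderiv u).differentiableAt)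
    (fun u => (hderiv u).deriv) s t

/-- Reduced Hindmarsh-Rose system with p ≠ 0, d = 2b, r = -(p+1),
β = 2(γ/p - α): `I = e^{-t}(2x + y + 2z/p)` is a first integral. -/
theorem hindmarsh_rose_case4 (α β γ b d p r : ℝ) (hp : p ≠ 0)
    (hd : d = 2 * b) (hr : r = -(p + 1)) (hβ : β = 2 * (γ / p - α))
    (x y z : ℝ → ℝ)
    (hx : ∀ t, HasDerivAt x (y t - z t + b * (x t) ^ 2 + α) t)
    (hy : ∀ t, HasDerivAt y (β - d * (x t) ^ 2 - y t) t)
    (hz : ∀ t, HasDerivAt z (p * x t - r * z t - γ) t) :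
    ∀ s t : ℝ,
      Real.exp (-s) * (2 * x s + y s + 2 * z s / p) =
        Real.exp (-t) * (2 * x t + y t + 2 * z t / p) := by
  -- Under these parameter relations the `x²` terms and the constants cancel: `L := 2x + y + 2z/p` solves `L' = L`.
  have hL : ∀ t, HasDerivAt (fun t => 2 * x t + y t + 2 * z t / p)
      (1 * (2 * x t + y t + 2 * z t / p)) t := fun t => by
    refine ((((hx t).const_mul 2).add (hy t)).add (((hz t).const_mul 2).div_const p)).congr_deriv ?_
    subst hd hr hβ
    field_simp
    ring
  simpa only [one_mul] using exp_neg_mul_mul_eq_of_hasDerivAt_const_mul hL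
end

section
/- Consider the reduced Hindmarsh–Rose system ẋ = y − z + bx² + α, ẏ = β − dx² − y, ż = px − rz − γ with p = 0, b = d, r ≠ 0 and α = −(βr + γ)/r (β, γ, r otherwise arbitrary). Then for every differentiable solution (x(t), y(t), z(t)), the function t ↦ r x(t) + r y(t) − z(t) is constant; that is, I = rx + ry − z is a time-independent first integral. In particular, when additionally r = −1, I = x + y + z is a first integral. -/
/-! Along the reduced Hindmarsh–Rose flow with `b = d`, the quadratic terms of `r ẋ + r ẏ` cancel
and the `y`- and `z`-terms cancel against `ż`, so `d/dt (r x + r y - z) = r (α + β) + γ - p x`.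
For `p = 0` and `α = -(β r + γ) / r` this derivative vanishes identically. -/

theorem hasDerivAt_hindmarshRose_linearCombination {α β γ b p r t : ℝ} {x y z : ℝ → ℝ}
    (hx : HasDerivAt x (y t - z t + b * x t ^ 2 + α) t)
    (hy : HasDerivAt y (β - b * x t ^ 2 - y t) t)
    (hz : HasDerivAt z (p * x t - r * z t - γ) t) :
    HasDerivAt (fun t => r * x t + r * y t - z t) (r * (α + β) + γ - p * x t) t :=
  (((hx.const_mul r).add (hy.const_mul r)).sub hz).congr_deriv (by ring)

/-- Reduced Hindmarsh-Rose system with p = 0, b = d, r ≠ 0, α = -(βr + γ)/r: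
`I = rx + ry - z` is a time-independent first integral; in particular,
if additionally r = -1 then `x + y + z` is a first integral. -/
theorem hindmarsh_rose_case6 (α β γ b d p r : ℝ)
    (hp : p = 0) (hb : b = d) (hr : r ≠ 0) (hα : α = -(β * r + γ) / r)
    (x y z : ℝ → ℝ)
    (hx : ∀ t, HasDerivAt x (y t - z t + b * (x t) ^ 2 + α) t)
    (hy : ∀ t, HasDerivAt y (β - d * (x t) ^ 2 - y t) t)
    (hz : ∀ t, HasDerivAt z (p * x t - r * z t - γ) t) :
    (∀ s t : ℝ,
      r * x s + r * y s - z s = r * x t + r * y t - z t) ∧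
    (r = -1 → ∀ s t : ℝ, x s + y s + z s = x t + y t + z t) := by
  subst hp hb hα
  have hI : ∀ t, HasDerivAt (fun t => r * x t + r * y t - z t) 0 t := fun t => by
    refine (hasDerivAt_hindmarshRose_linearCombination (hx t) (hy t) (hz t)).congr_deriv ?_
    field_simp
    ring
  have hconst := is_const_of_deriv_eq_zero (fun t => (hI t).differentiableAt) (fun t => (hI t).deriv)
  refine ⟨hconst, fun hr1 s t => ?_⟩
  have := hconst s t
  subst hr1
  linarith
end

section
/- Consider the Oregonator model ẋ = (1/ε)(x + y − qx² − xy), ẏ = −y + 2hz − xy, ż = (1/p)(x − z) with parameter values q = 0, ε = p = −1, h = −3/2; i.e. the system ẋ = −x − y + xy, ẏ = −y − 3z − xy, ż = −x + z. Then for every differentiable solution (x(t), y(t), z(t)), the function t ↦ e^{2t}(x(t) + y(t) + z(t)) is constant; that is, I = e^{2t}(x + y + z) is a first integral. -/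
open Real

theorem exp_mul_smul_eq_of_hasDerivAt_neg_smul {E : Type*} [NormedAddCommGroup E]
    [NormedSpace ℝ E] {f : ℝ → E} {c : ℝ} (hf : ∀ t, HasDerivAt f (-c • f t) t) (s t : ℝ) :
    exp (c * s) • f s = exp (c * t) • f t := by
  have hderiv : ∀ u, HasDerivAt (fun u => exp (c * u) • f u) 0 u := fun u => by
    have hexp : HasDerivAt (fun u => exp (c * u)) (exp (c * u) * c) u := by
      simpa using ((hasDerivAt_id u).const_mul c).exp
    refine (hexp.smul (hf u)).congr_deriv ?_
    rw [smul_smul, ← add_smul, mul_neg, neg_add_cancel, zero_smul]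
  exact is_const_of_deriv_eq_zero (fun u => (hderiv u).differentiableAt)
    (fun u => (hderiv u).deriv) s t

/-- Oregonator model with q = 0, ε = p = -1, h = -3/2:
`I = e^{2t}(x + y + z)` is a first integral. -/
theorem oregonator_first_integral (ε q p h : ℝ)
    (hq : q = 0) (hε : ε = -1) (hp : p = -1) (hh : h = -(3 / 2))
    (x y z : ℝ → ℝ)
    (hx : ∀ t, HasDerivAt x ((1 / ε) * (x t + y t - q * (x t) ^ 2 - x t * y t)) t)
    (hy : ∀ t, HasDerivAt y (-y t + 2 * h * z t - x t * y t) t)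
    (hz : ∀ t, HasDerivAt z ((1 / p) * (x t - z t)) t) :
    ∀ s t : ℝ,
      Real.exp (2 * s) * (x s + y s + z s) =
        Real.exp (2 * t) * (x t + y t + z t) := by
  subst hq hε hp hh
  -- At these parameters the quadratic terms cancel in the sum and `(x + y + z)' = -2 (x + y + z)`.
  have hsum : ∀ t, HasDerivAt (fun t => x t + y t + z t) (-2 * (x t + y t + z t)) t := fun t => by
    refine (((hx t).add (hy t)).add (hz t)).congr_deriv ?_
    ring
  exact exp_mul_smul_eq_of_hasDerivAt_neg_smul hsum
end
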